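/- arXiv:2109.10491 — 3 statements merged into one kernel-verified Lean document; each statement's English description precedes it below -/
import Mathlib

section
/- Let T > 0, a ∈ ℝ, σ > 0, θ, r ∈ [0, T], let g : [0,T] → ℝ be continuous, and let K : [0,T] × [0,T] → ℝ be such that for each fixed second argument ζ ∈ {θ, r}, the function s ↦ K(s,ζ) is nonnegative and nondecreasing on [ζ, T] and K(s,ζ) = 0 for s < ζ. Set Z := ∫₀ᵀ e^{a s + g(s)} ds and D := σ² ∫_{max(θ,r)}^T K(s,θ) K(s,r) e^{a s + g(s)} ds / Z − σ² (∫_r^T K(s,r) e^{a s + g(s)} ds)(∫_θ^T K(s,θ) e^{a s + g(s)} ds) / Z². Then 0 ≤ D ≤ 2σ² K(T,θ) K(T,r). -/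
/-!
Clamping `s ↦ K(s, ζ)` at `T` gives a nonnegative nondecreasing function `F_ζ` on all of `ℝ`
that vanishes below `ζ` and agrees with `K(·, ζ)` on `(-∞, T]`, so the three integrals in `D`
become integrals over `[0, T]` against the weight `w(s) = e^{as+g(s)}`, and
`D = σ² (Z ∫ F_θ F_r w − ∫ F_θ w ∫ F_r w) / Z²`. This is nonnegative by Chebyshev's association
inequality, obtained by integrating `(F_θ x − F_θ y)(F_r x − F_r y) w(x) w(y) ≥ 0` over the
square; and `D ≤ σ² ∫ F_θ F_r w / Z ≤ σ² K(T,θ) K(T,r)` because `F_ζ ≤ K(T, ζ)`.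
-/

open MeasureTheory Set

theorem Monovary.integral_mul_integral_le_integral_mul_integral {α : Type*} [MeasurableSpace α]
    {μ : Measure α} [SFinite μ] {f g w : α → ℝ} (hfg : Monovary f g) (hw : ∀ x, 0 ≤ w x)
    (hwi : Integrable w μ) (hfwi : Integrable (fun x => f x * w x) μ)
    (hgwi : Integrable (fun x => g x * w x) μ)
    (hfgwi : Integrable (fun x => f x * g x * w x) μ) :
    (∫ x, f x * w x ∂μ) * (∫ x, g x * w x ∂μ) ≤ (∫ x, w x ∂μ) * ∫ x, f x * g x * w x ∂μ := by
  have hpair : 0 ≤ ∫ p : α × α, (f p.2 - f p.1) * (g p.2 - g p.1) * (w p.1 * w p.2) ∂μ.prod μ :=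
    integral_nonneg fun p => mul_nonneg (hfg.sub_mul_sub_nonneg p.1 p.2) (mul_nonneg (hw _) (hw _))
  have hexpand : (fun p : α × α => (f p.2 - f p.1) * (g p.2 - g p.1) * (w p.1 * w p.2)) =
      fun p => w p.1 * (f p.2 * g p.2 * w p.2) - (f p.1 * w p.1) * (g p.2 * w p.2)
        - (g p.1 * w p.1) * (f p.2 * w p.2) + (f p.1 * g p.1 * w p.1) * w p.2 := by
    ext; ring
  have h₁ := hwi.mul_prod hfgwi
  have h₂ := hfwi.mul_prod hgwi
  have h₃ := hgwi.mul_prod hfwi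
  rw [hexpand, integral_add, integral_sub, integral_sub,
    integral_prod_mul w fun x => f x * g x * w x,
    integral_prod_mul (fun x => f x * w x) fun x => g x * w x,
    integral_prod_mul (fun x => g x * w x) fun x => f x * w x,
    integral_prod_mul (fun x => f x * g x * w x) w] at hpair
  · linarith
  exacts [h₁, h₂, h₁.sub h₂, h₃, (h₁.sub h₂).sub h₃, hfgwi.mul_prod hwi]

theorem intervalIntegral_eq_of_eq_zero_below {f : ℝ → ℝ} {a b c : ℝ} (hac : a ≤ c) (hcb : c ≤ b)
    (hzero : ∀ s < c, f s = 0) :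
    ∫ s in c..b, f s = ∫ s in a..b, f s := by
  by_cases hcbi : IntervalIntegrable f volume c b
  · have haci : IntervalIntegrable f volume a c := by
      rw [intervalIntegrable_iff_integrableOn_Ioo_of_le hac]
      exact integrableOn_zero.congr_fun (fun s hs => (hzero s hs.2).symm) measurableSet_Ioo
    have hac₀ : ∫ s in a..c, f s = 0 := by
      rw [intervalIntegral.integral_of_le hac, integral_Ioc_eq_integral_Ioo]
      exact setIntegral_eq_zero_of_forall_eq_zero fun s hs => hzero s hs.2
    rw [← intervalIntegral.integral_add_adjacent_intervals haci hcbi, hac₀, zero_add]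
  · rw [intervalIntegral.integral_undef hcbi, intervalIntegral.integral_undef fun habi =>
      hcbi (habi.mono_set (uIcc_subset_uIcc_right (mem_uIcc_of_le hac hcb)))]

section WeightedMonotone

variable {F G w : ℝ → ℝ} {a b : ℝ}

theorem Monotone.intervalIntegral_mul_integral_le (hab : a ≤ b) (hF : Monotone F)
    (hG : Monotone G) (hF0 : ∀ s, 0 ≤ F s) (hG0 : ∀ s, 0 ≤ G s) (hw : ContinuousOn w (Icc a b))
    (hw0 : ∀ s, 0 ≤ w s) :
    (∫ s in a..b, F s * w s) * (∫ s in a..b, G s * w s) ≤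
      (∫ s in a..b, w s) * ∫ s in a..b, F s * G s * w s := by
  rw [← uIcc_of_le hab] at hw
  have hwi := hw.intervalIntegrable (μ := volume)
  have hFwi := hF.intervalIntegrable.mul_continuousOn hw (μ := volume)
  have hGwi := hG.intervalIntegrable.mul_continuousOn hw (μ := volume)
  have hFGwi := (hF.mul hG hF0 hG0).intervalIntegrable.mul_continuousOn hw (μ := volume)
  rw [intervalIntegrable_iff_integrableOn_Ioc_of_le hab] at hwi hFwi hGwi hFGwi
  simp only [intervalIntegral.integral_of_le hab]
  exact (hF.monovary hG).integral_mul_integral_le_integral_mul_integral hw0 hwi hFwi hGwi hFGwi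

theorem Monotone.intervalIntegral_mul_mul_le (hab : a ≤ b) (hF : Monotone F)
    (hG : Monotone G) (hF0 : ∀ s, 0 ≤ F s) (hG0 : ∀ s, 0 ≤ G s) (hw : ContinuousOn w (Icc a b))
    (hw0 : ∀ s, 0 ≤ w s) :
    ∫ s in a..b, F s * G s * w s ≤ F b * G b * ∫ s in a..b, w s := by
  rw [← uIcc_of_le hab] at hw
  rw [← intervalIntegral.integral_const_mul]
  refine intervalIntegral.integral_mono_on hab
    ((hF.mul hG hF0 hG0).intervalIntegrable.mul_continuousOn hw)
    (hw.intervalIntegrable.const_mul _) fun s hs => ?_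
  exact mul_le_mul_of_nonneg_right (mul_le_mul (hF hs.2) (hG hs.2) (hG0 s) (hF0 b)) (hw0 s)

end WeightedMonotone

theorem div_sub_div_sq_mem_Icc {s A P Z M : ℝ} (hs : 0 ≤ s) (hZ : 0 < Z) (hP : 0 ≤ P)
    (hPA : P ≤ Z * A) (hAM : A ≤ M * Z) :
    s * A / Z - s * P / Z ^ 2 ∈ Icc 0 (s * M) := by
  have hD : s * A / Z - s * P / Z ^ 2 = s * (Z * A - P) / Z ^ 2 := by field_simp
  refine ⟨hD ▸ by have := sub_nonneg.2 hPA; positivity, ?_⟩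
  calc s * A / Z - s * P / Z ^ 2 ≤ s * A / Z := sub_le_self _ (by positivity)
    _ = s * (A / Z) := mul_div_assoc _ _ _
    _ ≤ s * M := by
      have hA : 0 ≤ A := (mul_nonneg_iff_of_pos_left hZ).1 (hP.trans hPA)
      gcongr
      exact div_le_of_le_mul₀ hZ.le ((mul_nonneg_iff_of_pos_right hZ).1 (hA.trans hAM)) hAM

section ClampAt

variable {k : ℝ → ℝ} {c T : ℝ}

theorem comp_min_eq_zero_of_lt (hzero : ∀ s < c, k s = 0) {s : ℝ} (hs : s < c) :
    k (min s T) = 0 :=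
  hzero _ ((min_le_left s T).trans_lt hs)

theorem comp_min_nonneg (hcT : c ≤ T) (hnn : ∀ s ∈ Icc c T, 0 ≤ k s)
    (hzero : ∀ s < c, k s = 0) (s : ℝ) : 0 ≤ k (min s T) := by
  rcases lt_or_ge s c with hs | hs
  · exact (comp_min_eq_zero_of_lt hzero hs).ge
  · exact hnn _ ⟨le_min hs hcT, min_le_right s T⟩

theorem monotone_comp_min (hcT : c ≤ T) (hnn : ∀ s ∈ Icc c T, 0 ≤ k s)
    (hmono : MonotoneOn k (Icc c T)) (hzero : ∀ s < c, k s = 0) :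
    Monotone fun s => k (min s T) := by
  intro x y hxy
  rcases lt_or_ge x c with hx | hx
  · exact (comp_min_eq_zero_of_lt hzero hx).trans_le (comp_min_nonneg hcT hnn hzero y)
  · exact hmono ⟨le_min hx hcT, min_le_right x T⟩
      ⟨le_min (hx.trans hxy) hcT, min_le_right y T⟩ (min_le_min_right T hxy)

theorem intervalIntegral_mul_eq_comp_min {a : ℝ} (hac : a ≤ c) (hcT : c ≤ T)
    (hzero : ∀ s < c, k s = 0) (φ : ℝ → ℝ) :
    ∫ s in c..T, k s * φ s = ∫ s in a..T, k (min s T) * φ s := by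
  rw [← intervalIntegral_eq_of_eq_zero_below hac hcT fun s hs => by
    rw [comp_min_eq_zero_of_lt hzero hs, zero_mul]]
  refine intervalIntegral.integral_congr fun s hs => ?_
  rw [min_eq_left (uIcc_of_le hcT ▸ hs).2]

end ClampAt

theorem pathwise_second_derivative_bound_general
    (T a σ θ r : ℝ) (hT : 0 < T)
    (hθ : θ ∈ Set.Icc (0 : ℝ) T) (hr : r ∈ Set.Icc (0 : ℝ) T)
    (g : ℝ → ℝ) (hg : ContinuousOn g (Set.Icc 0 T))
    (K : ℝ → ℝ → ℝ)
    (hKθnn : ∀ s ∈ Set.Icc θ T, 0 ≤ K s θ)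
    (hKθmono : MonotoneOn (fun s => K s θ) (Set.Icc θ T))
    (hKθzero : ∀ s, s < θ → K s θ = 0)
    (hKrnn : ∀ s ∈ Set.Icc r T, 0 ≤ K s r)
    (hKrmono : MonotoneOn (fun s => K s r) (Set.Icc r T))
    (hKrzero : ∀ s, s < r → K s r = 0)
    (Z D : ℝ)
    (hZ : Z = ∫ s in (0 : ℝ)..T, Real.exp (a * s + g s))
    (hD : D = σ ^ 2 * (∫ s in (max θ r)..T, K s θ * K s r * Real.exp (a * s + g s)) / Z -
        σ ^ 2 * ((∫ s in r..T, K s r * Real.exp (a * s + g s)) *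
          (∫ s in θ..T, K s θ * Real.exp (a * s + g s))) / Z ^ 2) :
    0 ≤ D ∧ D ≤ 2 * σ ^ 2 * K T θ * K T r := by
  obtain ⟨hθ0, hθT⟩ := hθ
  obtain ⟨hr0, hrT⟩ := hr
  set w : ℝ → ℝ := fun s => Real.exp (a * s + g s)
  set F : ℝ → ℝ := fun s => K (min s T) θ
  set G : ℝ → ℝ := fun s => K (min s T) r
  have hF : Monotone F := monotone_comp_min hθT hKθnn hKθmono hKθzero
  have hG : Monotone G := monotone_comp_min hrT hKrnn hKrmono hKrzero
  have hF0 : ∀ s, 0 ≤ F s := comp_min_nonneg hθT hKθnn hKθzero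
  have hG0 : ∀ s, 0 ≤ G s := comp_min_nonneg hrT hKrnn hKrzero
  have hw0 : ∀ s, 0 ≤ w s := fun s => (Real.exp_pos _).le
  have hw : ContinuousOn w (Icc 0 T) :=
    Real.continuous_exp.comp_continuousOn ((continuous_const_mul a).continuousOn.add hg)
  have hZpos : 0 < Z := hZ ▸ intervalIntegral.intervalIntegral_pos_of_pos_on
    (hw.intervalIntegrable_of_Icc hT.le) (fun s _ => Real.exp_pos _) hT
  have hbound := hF.intervalIntegral_mul_mul_le hT.le hG hF0 hG0 hw hw0
  simp only [F, G, min_self, ← hZ] at hbound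
  rw [intervalIntegral_mul_eq_comp_min hθ0 hθT hKθzero,
    intervalIntegral_mul_eq_comp_min hr0 hrT hKrzero,
    intervalIntegral_mul_eq_comp_min (k := fun s => K s θ * K s r) (le_max_of_le_left hθ0)
      (max_le hθT hrT) fun s hs => (lt_max_iff.1 hs).elim (fun h => by rw [hKθzero s h, zero_mul])
        (fun h => by rw [hKrzero s h, mul_zero])] at hD
  have hcheb := hF.intervalIntegral_mul_integral_le hT.le hG hF0 hG0 hw hw0
  rw [← hZ, mul_comm] at hcheb
  have hprod : 0 ≤ (∫ s in 0..T, G s * w s) * ∫ s in 0..T, F s * w s :=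
    mul_nonneg (intervalIntegral.integral_nonneg hT.le fun s _ => mul_nonneg (hG0 s) (hw0 s))
      (intervalIntegral.integral_nonneg hT.le fun s _ => mul_nonneg (hF0 s) (hw0 s))
  have hD_mem := hD ▸ div_sub_div_sq_mem_Icc (sq_nonneg σ) hZpos hprod hcheb hbound
  have hσK := mul_nonneg (sq_nonneg σ) (mul_nonneg (hKθnn T ⟨hθT, le_rfl⟩) (hKrnn T ⟨hrT, le_rfl⟩))
  exact ⟨hD_mem.1, hD_mem.2.trans (by linarith)⟩

/-- Pathwise second Malliavin-derivative bound (3.3): with `Z = ∫₀ᵀ e^{as+g(s)} ds` and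
`D = σ² ∫_{max(θ,r)}^T K(s,θ)K(s,r)e^{as+g(s)} ds / Z
   − σ² (∫_r^T K(s,r)e^{as+g(s)} ds)(∫_θ^T K(s,θ)e^{as+g(s)} ds) / Z²`,
if `s ↦ K(s,ζ)` is nonnegative and nondecreasing on `[ζ,T]` and vanishes for `s < ζ`
(for `ζ ∈ {θ, r}`), then `0 ≤ D ≤ 2σ² K(T,θ) K(T,r)`. -/
theorem pathwise_second_derivative_bound
    (T a σ θ r : ℝ) (hT : 0 < T) (hσ : 0 < σ)
    (hθ : θ ∈ Set.Icc (0 : ℝ) T) (hr : r ∈ Set.Icc (0 : ℝ) T)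
    (g : ℝ → ℝ) (hg : ContinuousOn g (Set.Icc 0 T))
    (K : ℝ → ℝ → ℝ)
    (hKθnn : ∀ s ∈ Set.Icc θ T, 0 ≤ K s θ)
    (hKθmono : MonotoneOn (fun s => K s θ) (Set.Icc θ T))
    (hKθzero : ∀ s, s < θ → K s θ = 0)
    (hKrnn : ∀ s ∈ Set.Icc r T, 0 ≤ K s r)
    (hKrmono : MonotoneOn (fun s => K s r) (Set.Icc r T))
    (hKrzero : ∀ s, s < r → K s r = 0)
    (Z D : ℝ)
    (hZ : Z = ∫ s in (0 : ℝ)..T, Real.exp (a * s + g s))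
    (hD : D = σ ^ 2 * (∫ s in (max θ r)..T, K s θ * K s r * Real.exp (a * s + g s)) / Z -
        σ ^ 2 * ((∫ s in r..T, K s r * Real.exp (a * s + g s)) *
          (∫ s in θ..T, K s θ * Real.exp (a * s + g s))) / Z ^ 2) :
    0 ≤ D ∧ D ≤ 2 * σ ^ 2 * K T θ * K T r :=
  pathwise_second_derivative_bound_general T a σ θ r hT hθ hr g hg K hKθnn hKθmono hKθzero hKrnn
    hKrmono hKrzero Z D hZ hD
end

section
/- Let T > 0, a ∈ ℝ, σ > 0, H ∈ (1/2, 1), let g : [0,T] → ℝ be continuous, and let K : [0,T] × [0,T] → ℝ be a nonnegative measurable function with K(t,θ) = 0 for θ > t, satisfying ∫₀^{min(s,t)} K(t,θ)K(s,θ) dθ = (1/2)(t^{2H} + s^{2H} − |t−s|^{2H}) for all 0 ≤ s, t ≤ T. Define D_θ := σ ∫_θ^T K(s,θ) e^{a s + g(s)} ds / ∫₀ᵀ e^{a s + g(s)} ds. Then ∫₀ᵀ D_θ² dθ ≥ (σ² T^{2H} / (2H + 2)) · exp(−4|a|T + 2 min_{[0,T]} g − 2 max_{[0,T]} g). -/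
/-!
The weight `E s = exp (a s + g s)` lies between `c = exp (-|a| T + min g)` and
`C = exp (|a| T + max g)` on `[0, T]`, so `|D_θ| ≥ |σ| c Φ(θ) / (T C)` with
`Φ(θ) = ∫_θ^T K(s, θ) ds`. By Tonelli, `∫₀ᵀ Φ² = ∫₀ᵀ ∫₀ᵀ ∫ K(s, θ) K(t, θ) dθ ds dt`, and the
reproducing property of `K` turns the inner integral into the fBm covariance, whose double
integral over `[0, T]²` is `T^{2H+2}/(2H+2)`. As `K(·, θ)` is not assumed integrable, `Φ` and
the Tonelli argument are carried out with lower Lebesgue integrals in `ℝ≥0∞`.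
-/

open MeasureTheory Set
open scoped ENNReal

noncomputable def fbmCovariance (H t s : ℝ) : ℝ :=
  1 / 2 * (t ^ (2 * H) + s ^ (2 * H) - |t - s| ^ (2 * H))

lemma fbmCovariance_pos {H s t : ℝ} (hH : 0 < H) (hs : 0 < s) (ht : 0 < t) :
    0 < fbmCovariance H t s := by
  have hp : 0 ≤ 2 * H := by positivity
  unfold fbmCovariance
  rcases le_total s t with h | h
  · have : |t - s| ^ (2 * H) ≤ t ^ (2 * H) :=
      Real.rpow_le_rpow (abs_nonneg _) (by rw [abs_of_nonneg (by linarith)]; linarith) hp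
    linarith [Real.rpow_pos_of_pos hs (2 * H)]
  · have : |t - s| ^ (2 * H) ≤ s ^ (2 * H) :=
      Real.rpow_le_rpow (abs_nonneg _) (by rw [abs_of_nonpos (by linarith)]; linarith) hp
    linarith [Real.rpow_pos_of_pos ht (2 * H)]

lemma continuous_fbmCovariance {H : ℝ} (hH : 0 < H) :
    Continuous (Function.uncurry fun s t => fbmCovariance H t s) := by
  unfold fbmCovariance
  fun_prop (disch := positivity)

lemma integral_rpow_zero_left {p b : ℝ} (hp : -1 < p) :
    ∫ x in (0 : ℝ)..b, x ^ p = b ^ (p + 1) / (p + 1) := by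
  rw [integral_rpow (Or.inl hp), Real.zero_rpow (by linarith), sub_zero]

lemma integral_abs_sub_rpow {p s T : ℝ} (hp : 0 ≤ p) (hs : s ∈ Icc 0 T) :
    ∫ t in (0 : ℝ)..T, |t - s| ^ p = (s ^ (p + 1) + (T - s) ^ (p + 1)) / (p + 1) := by
  have hint (u v : ℝ) : IntervalIntegrable (fun t => |t - s| ^ p) volume u v :=
    (Real.continuous_rpow_const hp).comp (continuous_id.sub continuous_const).abs
      |>.intervalIntegrable u v
  have hleft : ∫ t in (0 : ℝ)..s, |t - s| ^ p = s ^ (p + 1) / (p + 1) := by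
    rw [intervalIntegral.integral_congr (g := fun t => (s - t) ^ p),
      intervalIntegral.integral_comp_sub_left (fun u => u ^ p), sub_self, sub_zero,
      integral_rpow_zero_left (by linarith)]
    intro t ht
    rw [uIcc_of_le hs.1] at ht
    simp only [abs_sub_comm t s, abs_of_nonneg (sub_nonneg.2 ht.2)]
  have hright : ∫ t in s..T, |t - s| ^ p = (T - s) ^ (p + 1) / (p + 1) := by
    rw [intervalIntegral.integral_congr (g := fun t => (t - s) ^ p),
      intervalIntegral.integral_comp_sub_right (fun u => u ^ p), sub_self,
      integral_rpow_zero_left (by linarith)]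
    intro t ht
    rw [uIcc_of_le hs.2] at ht
    simp only [abs_of_nonneg (sub_nonneg.2 ht.1)]
  rw [← intervalIntegral.integral_add_adjacent_intervals (hint 0 s) (hint s T), hleft, hright,
    add_div]

lemma integral_fbmCovariance {H s T : ℝ} (hH : 0 < H) (hs : s ∈ Icc 0 T) :
    ∫ t in (0 : ℝ)..T, fbmCovariance H t s =
      1 / 2 * (T ^ (2 * H + 1) / (2 * H + 1) + T * s ^ (2 * H)
        - (s ^ (2 * H + 1) + (T - s) ^ (2 * H + 1)) / (2 * H + 1)) := by
  have hp : 0 ≤ 2 * H := by positivity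
  unfold fbmCovariance
  rw [intervalIntegral.integral_const_mul, intervalIntegral.integral_sub,
    intervalIntegral.integral_add, integral_rpow_zero_left (by linarith), intervalIntegral.integral_const,
    integral_abs_sub_rpow hp hs, smul_eq_mul, sub_zero]
  all_goals apply Continuous.intervalIntegrable; fun_prop (disch := positivity)

lemma integral_integral_fbmCovariance {H T : ℝ} (hH : 0 < H) (hT : 0 ≤ T) :
    ∫ s in (0 : ℝ)..T, ∫ t in (0 : ℝ)..T, fbmCovariance H t s =
      T ^ (2 * H + 2) / (2 * H + 2) := by
  have hp : -1 < 2 * H := by linarith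
  have hp1 : -1 < 2 * H + 1 := by linarith
  rw [intervalIntegral.integral_congr fun s hs => integral_fbmCovariance hH (uIcc_of_le hT ▸ hs),
    intervalIntegral.integral_const_mul, intervalIntegral.integral_sub,
    intervalIntegral.integral_add, intervalIntegral.integral_div, intervalIntegral.integral_div,
    intervalIntegral.integral_add, intervalIntegral.integral_const,
    intervalIntegral.integral_const_mul, integral_rpow_zero_left hp, integral_rpow_zero_left hp1,
    intervalIntegral.integral_comp_sub_left (fun u => u ^ (2 * H + 1)), sub_self, sub_zero,
    integral_rpow_zero_left hp1, smul_eq_mul]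
  · have hT2 : T ^ (2 * H + 2) = T ^ (2 * H + 1) * T := by
      rw [show 2 * H + 2 = 2 * H + 1 + 1 by ring, Real.rpow_add_one' hT (by positivity)]
    rw [show 2 * H + 1 + 1 = 2 * H + 2 by ring, hT2]
    field_simp
    ring
  all_goals apply Continuous.intervalIntegrable; fun_prop (disch := positivity)

lemma lintegral_lintegral_ofReal_fbmCovariance {H T : ℝ} (hH : 0 < H) (hT : 0 ≤ T) :
    ∫⁻ s in Ioc 0 T, ∫⁻ t in Ioc 0 T, ENNReal.ofReal (fbmCovariance H t s) =
      ENNReal.ofReal (T ^ (2 * H + 2) / (2 * H + 2)) := by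
  have hcont := continuous_fbmCovariance hH
  have hnonneg (s : ℝ) (hs : s ∈ Ioc 0 T) : ∀ t ∈ Ioc 0 T, 0 ≤ fbmCovariance H t s :=
    fun t ht => (fbmCovariance_pos hH hs.1 ht.1).le
  have hinner : EqOn (fun s => ∫⁻ t in Ioc 0 T, ENNReal.ofReal (fbmCovariance H t s))
      (fun s => ENNReal.ofReal (∫ t in (0 : ℝ)..T, fbmCovariance H t s)) (Ioc 0 T) := by
    intro s hs
    dsimp only
    rw [intervalIntegral.integral_of_le hT, ofReal_integral_eq_lintegral_ofReal
      (hcont.uncurry_left s).integrableOn_Ioc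
      ((ae_restrict_iff' measurableSet_Ioc).2 (ae_of_all _ (hnonneg s hs)))]
  rw [setLIntegral_congr_fun measurableSet_Ioc hinner, ← ofReal_integral_eq_lintegral_ofReal,
    ← intervalIntegral.integral_of_le hT, integral_integral_fbmCovariance hH hT]
  · exact (intervalIntegral.continuous_parametric_intervalIntegral_of_continuous'
      hcont 0 T).integrableOn_Ioc
  · refine (ae_restrict_iff' measurableSet_Ioc).2 (ae_of_all _ fun s hs => ?_)
    dsimp only [Pi.zero_apply]
    rw [intervalIntegral.integral_of_le hT]
    exact setIntegral_nonneg measurableSet_Ioc (hnonneg s hs)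

lemma lintegral_sq_lintegral_eq {α β : Type*} [MeasurableSpace α] [MeasurableSpace β]
    {μ : Measure α} {ν : Measure β} [SFinite μ] [SFinite ν] {f : α → β → ℝ≥0∞}
    (hf : Measurable (Function.uncurry f)) :
    ∫⁻ b, (∫⁻ a, f a b ∂μ) ^ 2 ∂ν = ∫⁻ a, ∫⁻ a', ∫⁻ b, f a b * f a' b ∂ν ∂μ ∂μ := by
  have hsec (b : β) : Measurable fun a => f a b :=
    hf.comp (measurable_id.prodMk measurable_const)
  calc ∫⁻ b, (∫⁻ a, f a b ∂μ) ^ 2 ∂ν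
      = ∫⁻ b, ∫⁻ a, ∫⁻ a', f a b * f a' b ∂μ ∂μ ∂ν := by
        congr with b
        rw [sq, lintegral_lintegral_mul (hsec b).aemeasurable (hsec b).aemeasurable]
    _ = ∫⁻ a, ∫⁻ b, ∫⁻ a', f a b * f a' b ∂μ ∂ν ∂μ := by
        refine lintegral_lintegral_swap (Measurable.aemeasurable ?_)
        refine Measurable.lintegral_prod_right
          (f := fun (p : β × α) a' => f p.2 p.1 * f a' p.1) ?_
        exact (hf.comp (measurable_snd.comp measurable_fst |>.prodMk
          (measurable_fst.comp measurable_fst))).mul (hf.comp (measurable_snd.prodMk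
          (measurable_fst.comp measurable_fst)))
    _ = ∫⁻ a, ∫⁻ a', ∫⁻ b, f a b * f a' b ∂ν ∂μ ∂μ := by
        congr with a
        refine lintegral_lintegral_swap (Measurable.aemeasurable ?_)
        exact (hf.comp (measurable_const.prodMk measurable_fst)).mul
          (hf.comp (measurable_snd.prodMk measurable_fst))

lemma setLIntegral_Ioc_ofReal_mul_eq_of_volterra {K : ℝ → ℝ → ℝ} (hKnn : ∀ t θ, 0 ≤ K t θ)
    (hKzero : ∀ t θ, t < θ → K t θ = 0) {s t T : ℝ} (hs : s ∈ Icc 0 T) (ht : t ∈ Icc 0 T)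
    (hint : IntegrableOn (fun θ => K t θ * K s θ) (Ioc 0 (min s t))) :
    ∫⁻ θ in Ioc 0 T, ENNReal.ofReal (K s θ) * ENNReal.ofReal (K t θ) =
      ENNReal.ofReal (∫ θ in (0 : ℝ)..min s t, K t θ * K s θ) := by
  have hmin : 0 ≤ min s t := le_min hs.1 ht.1
  have hvanish :
      ∫⁻ θ in Ioc (min s t) T, ENNReal.ofReal (K s θ) * ENNReal.ofReal (K t θ) = 0 := by
    refine setLIntegral_eq_zero measurableSet_Ioc fun θ hθ => ?_
    rcases min_lt_iff.mp hθ.1 with h | h <;> simp [hKzero _ _ h]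
  rw [← Ioc_union_Ioc_eq_Ioc hmin (min_le_of_left_le hs.2),
    lintegral_union measurableSet_Ioc (Ioc_disjoint_Ioc_of_le le_rfl), hvanish, add_zero,
    intervalIntegral.integral_of_le hmin, ofReal_integral_eq_lintegral_ofReal hint
      (ae_of_all _ fun θ => mul_nonneg (hKnn t θ) (hKnn s θ))]
  exact lintegral_congr fun θ => by rw [mul_comm, ENNReal.ofReal_mul (hKnn t θ)]

theorem lintegral_sq_lintegral_volterra_eq {H T : ℝ} (hH : 0 < H) (hT : 0 ≤ T)
    {K : ℝ → ℝ → ℝ} (hKmeas : Measurable (Function.uncurry K)) (hKnn : ∀ t θ, 0 ≤ K t θ)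
    (hKzero : ∀ t θ, t < θ → K t θ = 0)
    (hrep : ∀ s ∈ Icc 0 T, ∀ t ∈ Icc 0 T,
      ∫ θ in (0 : ℝ)..min s t, K t θ * K s θ = fbmCovariance H t s) :
    ∫⁻ θ in Ioc 0 T, (∫⁻ s in Ioc 0 T, ENNReal.ofReal (K s θ)) ^ 2 =
      ENNReal.ofReal (T ^ (2 * H + 2) / (2 * H + 2)) := by
  rw [lintegral_sq_lintegral_eq (f := fun s θ => ENNReal.ofReal (K s θ))
      (ENNReal.measurable_ofReal.comp hKmeas),
    ← lintegral_lintegral_ofReal_fbmCovariance hH hT]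
  refine setLIntegral_congr_fun measurableSet_Ioc fun s hs =>
    setLIntegral_congr_fun measurableSet_Ioc fun t ht => ?_
  have hs' : s ∈ Icc 0 T := Ioc_subset_Icc_self hs
  have ht' : t ∈ Icc 0 T := Ioc_subset_Icc_self ht
  have hpos := hrep s hs' t ht' ▸ fbmCovariance_pos hH hs.1 ht.1
  rw [setLIntegral_Ioc_ofReal_mul_eq_of_volterra hKnn hKzero hs' ht', hrep s hs' t ht']
  -- a non-integrable product would have Bochner integral `0`, not the positive covariance
  refine Integrable.of_integral_ne_zero ?_
  rw [← intervalIntegral.integral_of_le (le_min hs.1.le ht.1.le)]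
  exact hpos.ne'

lemma exp_mul_add_mem_Icc {a s T : ℝ} {g : ℝ → ℝ} (hg : ContinuousOn g (Icc 0 T))
    (hs : s ∈ Icc 0 T) :
    Real.exp (a * s + g s) ∈
      Icc (Real.exp (-(|a| * T) + sInf (g '' Icc 0 T)))
        (Real.exp (|a| * T + sSup (g '' Icc 0 T))) := by
  have hcpt : IsCompact (g '' Icc 0 T) := isCompact_Icc.image_of_continuousOn hg
  have hmin := csInf_le hcpt.bddBelow (mem_image_of_mem g hs)
  have hmax := le_csSup hcpt.bddAbove (mem_image_of_mem g hs)
  have has : |a * s| ≤ |a| * T := by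
    rw [abs_mul, abs_of_nonneg hs.1]
    exact mul_le_mul_of_nonneg_left hs.2 (abs_nonneg a)
  obtain ⟨h₁, h₂⟩ := abs_le.mp has
  exact ⟨Real.exp_le_exp.2 (by linarith), Real.exp_le_exp.2 (by linarith)⟩

lemma intervalIntegral_mem_Icc_of_mem_Icc {f : ℝ → ℝ} {a b c C : ℝ} (hab : a ≤ b)
    (hf : IntervalIntegrable f volume a b) (h : ∀ x ∈ Icc a b, f x ∈ Icc c C) :
    ∫ x in a..b, f x ∈ Icc ((b - a) * c) ((b - a) * C) := by
  rw [← smul_eq_mul, ← smul_eq_mul, ← intervalIntegral.integral_const,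
    ← intervalIntegral.integral_const]
  exact ⟨intervalIntegral.integral_mono_on hab intervalIntegrable_const hf (fun x hx => (h x hx).1),
    intervalIntegral.integral_mono_on hab hf intervalIntegrable_const (fun x hx => (h x hx).2)⟩

lemma intervalIntegral_eq_toReal_setLIntegral_Ioc {f : ℝ → ℝ} {θ T : ℝ} (hθ : θ ∈ Icc 0 T)
    (hf : ∀ s ∈ Ioc 0 T, 0 ≤ f s) (hf0 : ∀ s < θ, f s = 0)
    (hfm : AEStronglyMeasurable f (volume.restrict (Ioc 0 T))) :
    ∫ s in θ..T, f s = (∫⁻ s in Ioc 0 T, ENNReal.ofReal (f s)).toReal := by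
  have hvanish : ∀ᵐ s, s ∈ Ioc 0 T \ Ioc θ T → f s = 0 :=
    (Measure.ae_ne volume θ).mono fun s hne hs =>
      hf0 s (lt_of_le_of_ne (not_lt.1 fun h => hs.2 ⟨h, hs.1.2⟩) hne)
  rw [intervalIntegral.integral_of_le hθ.2, ← setIntegral_eq_of_subset_of_ae_sdiff_eq_zero
    measurableSet_Ioc.nullMeasurableSet (Ioc_subset_Ioc_left hθ.1) hvanish,
    integral_eq_lintegral_of_nonneg_ae
      ((ae_restrict_iff' measurableSet_Ioc).2 (ae_of_all _ hf)) hfm]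

lemma lintegral_ofReal_mul_mem_Icc {α : Type*} [MeasurableSpace α] {μ : Measure α}
    {f w : α → ℝ} {c C : ℝ} (hf : 0 ≤ f) (hw : ∀ᵐ x ∂μ, w x ∈ Icc c C) :
    ENNReal.ofReal c * ∫⁻ x, ENNReal.ofReal (f x) ∂μ ≤ ∫⁻ x, ENNReal.ofReal (f x * w x) ∂μ ∧
      ∫⁻ x, ENNReal.ofReal (f x * w x) ∂μ ≤
        ENNReal.ofReal C * ∫⁻ x, ENNReal.ofReal (f x) ∂μ := by
  refine ⟨(lintegral_const_mul_le _ _).trans (lintegral_mono_ae (hw.mono fun x hx => ?_)),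
    (lintegral_mono_ae (hw.mono fun x hx => ?_)).trans_eq
      (lintegral_const_mul' _ _ ENNReal.ofReal_ne_top)⟩
  · rw [← ENNReal.ofReal_mul' (hf x), mul_comm]
    exact ENNReal.ofReal_le_ofReal (mul_le_mul_of_nonneg_left hx.1 (hf x))
  · rw [← ENNReal.ofReal_mul' (hf x), mul_comm C]
    exact ENNReal.ofReal_le_ofReal (mul_le_mul_of_nonneg_left hx.2 (hf x))

lemma mul_toReal_lintegral_sq_le_integral_toReal_sq {α : Type*} [MeasurableSpace α]
    {μ : Measure α} {Φ Ψ : α → ℝ≥0∞} {c C : ℝ≥0∞} (hΨ : AEMeasurable Ψ μ) (hC : C ≠ ∞)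
    (hΦ : ∫⁻ x, Φ x ^ 2 ∂μ ≠ ∞) (hlow : ∀ᵐ x ∂μ, c * Φ x ≤ Ψ x)
    (hup : ∀ᵐ x ∂μ, Ψ x ≤ C * Φ x) :
    c.toReal ^ 2 * (∫⁻ x, Φ x ^ 2 ∂μ).toReal ≤ ∫ x, (Ψ x).toReal ^ 2 ∂μ := by
  have hΨfin : ∫⁻ x, Ψ x ^ 2 ∂μ ≠ ∞ := by
    refine ne_top_of_le_ne_top (ENNReal.mul_ne_top (ENNReal.pow_ne_top (n := 2) hC) hΦ) ?_
    rw [← lintegral_const_mul' _ _ (ENNReal.pow_ne_top hC)]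
    exact lintegral_mono_ae (hup.mono fun x hx => by rw [← mul_pow]; gcongr)
  have hΨ2 : AEMeasurable (fun x => Ψ x ^ 2) μ := hΨ.pow_const 2
  simp_rw [← ENNReal.toReal_pow]
  rw [integral_toReal hΨ2 (ae_lt_top' hΨ2 hΨfin), ← ENNReal.toReal_mul]
  refine ENNReal.toReal_mono hΨfin ((lintegral_const_mul_le _ _).trans
    (lintegral_mono_ae (hlow.mono fun x hx => ?_)))
  rw [← mul_pow]
  gcongr

theorem sq_mul_le_integral_sq_weighted_volterra {K : ℝ → ℝ → ℝ} {w : ℝ → ℝ} {T c C V : ℝ}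
    (hT : 0 ≤ T) (hKmeas : Measurable (Function.uncurry K)) (hKnn : ∀ t θ, 0 ≤ K t θ)
    (hKzero : ∀ t θ, t < θ → K t θ = 0)
    (hKsq : ∫⁻ θ in Ioc 0 T, (∫⁻ s in Ioc 0 T, ENNReal.ofReal (K s θ)) ^ 2 = ENNReal.ofReal V)
    (hV : 0 ≤ V) (hc : 0 ≤ c) (hw : AEMeasurable w (volume.restrict (Ioc 0 T)))
    (hwb : ∀ s ∈ Icc 0 T, w s ∈ Icc c C) :
    c ^ 2 * V ≤ ∫ θ in (0 : ℝ)..T, (∫ s in θ..T, K s θ * w s) ^ 2 := by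
  set Ψ : ℝ → ℝ≥0∞ := fun θ => ∫⁻ s in Ioc 0 T, ENNReal.ofReal (K s θ * w s)
  have hΨ (θ : ℝ) := lintegral_ofReal_mul_mem_Icc (μ := volume.restrict (Ioc 0 T))
    (fun s => hKnn s θ) ((ae_restrict_iff' measurableSet_Ioc).2
      (ae_of_all _ fun s hs => hwb s (Ioc_subset_Icc_self hs)))
  have hΨmeas : AEMeasurable Ψ (volume.restrict (Ioc 0 T)) :=
    AEMeasurable.lintegral_prod_right'
      (f := fun p : ℝ × ℝ => ENNReal.ofReal (K p.2 p.1 * w p.2))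
      (ENNReal.measurable_ofReal.comp_aemeasurable
        ((hKmeas.comp measurable_swap).aemeasurable.mul hw.comp_snd))
  have key := mul_toReal_lintegral_sq_le_integral_toReal_sq hΨmeas ENNReal.ofReal_ne_top
    (hKsq ▸ ENNReal.ofReal_ne_top) (ae_of_all _ fun θ => (hΨ θ).1)
    (ae_of_all _ fun θ => (hΨ θ).2)
  rw [hKsq, ENNReal.toReal_ofReal hc, ENNReal.toReal_ofReal hV] at key
  refine key.trans_eq ?_
  rw [intervalIntegral.integral_of_le hT]
  refine setIntegral_congr_fun measurableSet_Ioc fun θ hθ => ?_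
  rw [intervalIntegral_eq_toReal_setLIntegral_Ioc (Ioc_subset_Icc_self hθ)
    (fun s hs => mul_nonneg (hKnn s θ) (hc.trans (hwb s (Ioc_subset_Icc_self hs)).1))
    (fun s hs => by rw [hKzero s θ hs, zero_mul])
    ((hKmeas.comp measurable_prodMk_right).aemeasurable.mul hw).aestronglyMeasurable]

theorem pathwise_malliavin_matrix_lower_bound_general
    (T a σ H : ℝ) (hT : 0 < T) (hH : H ∈ Set.Ioo (1 / 2 : ℝ) 1)
    (g : ℝ → ℝ) (hg : ContinuousOn g (Set.Icc 0 T))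
    (K : ℝ → ℝ → ℝ) (hKmeas : Measurable (Function.uncurry K))
    (hKnn : ∀ t θ, 0 ≤ K t θ)
    (hKzero : ∀ t θ, t < θ → K t θ = 0)
    (hrep : ∀ s ∈ Set.Icc (0 : ℝ) T, ∀ t ∈ Set.Icc (0 : ℝ) T,
        (∫ θ in (0 : ℝ)..(min s t), K t θ * K s θ) =
          (1 / 2) * (t ^ (2 * H) + s ^ (2 * H) - |t - s| ^ (2 * H))) :
    σ ^ 2 * T ^ (2 * H) / (2 * H + 2) *
        Real.exp (-4 * |a| * T + 2 * sInf (g '' Set.Icc 0 T) -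
          2 * sSup (g '' Set.Icc 0 T)) ≤
      ∫ θ in (0 : ℝ)..T,
        (σ * (∫ s in θ..T, K s θ * Real.exp (a * s + g s)) /
          (∫ s in (0 : ℝ)..T, Real.exp (a * s + g s))) ^ 2 := by
  have hH₀ : 0 < H := by linarith [hH.1]
  set E : ℝ → ℝ := fun s => Real.exp (a * s + g s)
  set c := Real.exp (-(|a| * T) + sInf (g '' Icc 0 T))
  set C := Real.exp (|a| * T + sSup (g '' Icc 0 T))
  have hE : ∀ s ∈ Icc 0 T, E s ∈ Icc c C := fun s hs => exp_mul_add_mem_Icc hg hs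
  have hEcont : ContinuousOn E (Icc 0 T) := by fun_prop
  set I := ∫ s in (0 : ℝ)..T, E s
  have hI : I ∈ Icc (T * c) (T * C) := by
    simpa only [sub_zero] using
      intervalIntegral_mem_Icc_of_mem_Icc hT.le (hEcont.intervalIntegrable_of_Icc hT.le) hE
  have hI₀ : 0 < I := lt_of_lt_of_le (by positivity) hI.1
  have hV : 0 ≤ T ^ (2 * H + 2) / (2 * H + 2) := by positivity
  have hexp : Real.exp (-4 * |a| * T + 2 * sInf (g '' Icc 0 T) - 2 * sSup (g '' Icc 0 T)) * C ^ 2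
      = c ^ 2 := by
    simp only [c, C, sq, ← Real.exp_add]
    ring_nf
  calc _ = σ ^ 2 / (T * C) ^ 2 * (c ^ 2 * (T ^ (2 * H + 2) / (2 * H + 2))) := by
        have hC : C ≠ 0 := (Real.exp_pos _).ne'
        rw [Real.rpow_add hT, Real.rpow_two, ← hexp]
        field_simp
    _ ≤ σ ^ 2 / I ^ 2 * (c ^ 2 * (T ^ (2 * H + 2) / (2 * H + 2))) := by gcongr; exact hI.2
    _ ≤ σ ^ 2 / I ^ 2 * ∫ θ in (0 : ℝ)..T, (∫ s in θ..T, K s θ * E s) ^ 2 := by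
        gcongr
        exact sq_mul_le_integral_sq_weighted_volterra hT.le hKmeas hKnn hKzero
          (lintegral_sq_lintegral_volterra_eq hH₀ hT.le hKmeas hKnn hKzero hrep) hV
          (Real.exp_pos _).le
          ((hEcont.mono Ioc_subset_Icc_self).aemeasurable measurableSet_Ioc) hE
    _ = _ := by
        rw [← intervalIntegral.integral_const_mul]
        congr with θ
        ring

/-- Pathwise lower bound (3.12) for the Malliavin matrix: with
`D_θ = σ ∫_θ^T K(s,θ) e^{as+g(s)} ds / ∫₀ᵀ e^{as+g(s)} ds`, where `K` is a nonnegative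
measurable Volterra kernel with the fBm reproducing property,
`∫₀ᵀ D_θ² dθ ≥ (σ² T^{2H}/(2H+2)) exp(−4|a|T + 2 min g − 2 max g)`. -/
theorem pathwise_malliavin_matrix_lower_bound
    (T a σ H : ℝ) (hT : 0 < T) (hσ : 0 < σ) (hH : H ∈ Set.Ioo (1 / 2 : ℝ) 1)
    (g : ℝ → ℝ) (hg : ContinuousOn g (Set.Icc 0 T))
    (K : ℝ → ℝ → ℝ) (hKmeas : Measurable (Function.uncurry K))
    (hKnn : ∀ t θ, 0 ≤ K t θ)
    (hKzero : ∀ t θ, t < θ → K t θ = 0)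
    (hrep : ∀ s ∈ Set.Icc (0 : ℝ) T, ∀ t ∈ Set.Icc (0 : ℝ) T,
        (∫ θ in (0 : ℝ)..(min s t), K t θ * K s θ) =
          (1 / 2) * (t ^ (2 * H) + s ^ (2 * H) - |t - s| ^ (2 * H))) :
    σ ^ 2 * T ^ (2 * H) / (2 * H + 2) *
        Real.exp (-4 * |a| * T + 2 * sInf (g '' Set.Icc 0 T) -
          2 * sSup (g '' Set.Icc 0 T)) ≤
      ∫ θ in (0 : ℝ)..T,
        (σ * (∫ s in θ..T, K s θ * Real.exp (a * s + g s)) /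
          (∫ s in (0 : ℝ)..T, Real.exp (a * s + g s))) ^ 2 :=
  pathwise_malliavin_matrix_lower_bound_general T a σ H hT hH g hg K hKmeas hKnn hKzero hrep
end

section
/- Let T > 0, a ∈ ℝ, σ > 0, H ∈ (1/2, 1), let g : [0,T] → ℝ be continuous, and let K : [0,T] × [0,T] → ℝ be a nonnegative measurable function with K(t,θ) = 0 for θ > t, such that s ↦ K(s,θ) is nondecreasing on [θ, T] for each θ, and ∫₀^{min(s,t)} K(t,θ)K(s,θ) dθ = (1/2)(t^{2H} + s^{2H} − |t−s|^{2H}) for all 0 ≤ s, t ≤ T. Define D_θ := σ ∫_θ^T K(s,θ) e^{a s + g(s)} ds / ∫₀ᵀ e^{a s + g(s)} ds. Then ∫₀ᵀ D_θ² dθ ≤ σ² T^{2H}. -/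
open MeasureTheory

/-- Pathwise upper bound for the Malliavin matrix: with
`D_θ = σ ∫_θ^T K(s,θ) e^{as+g(s)} ds / ∫₀ᵀ e^{as+g(s)} ds`, where `K` is a nonnegative
measurable Volterra kernel, nondecreasing in its first argument on `[θ,T]`, with the fBm
reproducing property, one has `∫₀ᵀ D_θ² dθ ≤ σ² T^{2H}`. -/
theorem pathwise_malliavin_matrix_upper_bound
    (T a σ H : ℝ) (hT : 0 < T) (hσ : 0 < σ) (hH : H ∈ Set.Ioo (1 / 2 : ℝ) 1)
    (g : ℝ → ℝ) (hg : ContinuousOn g (Set.Icc 0 T))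
    (K : ℝ → ℝ → ℝ) (hKmeas : Measurable (Function.uncurry K))
    (hKnn : ∀ t θ, 0 ≤ K t θ)
    (hKzero : ∀ t θ, t < θ → K t θ = 0)
    (hKmono : ∀ θ, MonotoneOn (fun s => K s θ) (Set.Icc θ T))
    (hrep : ∀ s ∈ Set.Icc (0 : ℝ) T, ∀ t ∈ Set.Icc (0 : ℝ) T,
        (∫ θ in (0 : ℝ)..(min s t), K t θ * K s θ) =
          (1 / 2) * (t ^ (2 * H) + s ^ (2 * H) - |t - s| ^ (2 * H))) :
    (∫ θ in (0 : ℝ)..T,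
        (σ * (∫ s in θ..T, K s θ * Real.exp (a * s + g s)) /
          (∫ s in (0 : ℝ)..T, Real.exp (a * s + g s))) ^ 2) ≤
      σ ^ 2 * T ^ (2 * H) := by
  set E : ℝ → ℝ := fun s => Real.exp (a * s + g s) with hE
  have hEcont : ContinuousOn E (Set.Icc 0 T) := by
    apply Real.continuous_exp.comp_continuousOn
    exact (continuousOn_const.mul continuousOn_id).add hg
  have hEpos : ∀ s, 0 < E s := fun s => Real.exp_pos _
  have hEint : IntegrableOn E (Set.Icc 0 T) := hEcont.integrableOn_Icc
  have hEII : IntervalIntegrable E volume 0 T := by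
    apply ContinuousOn.intervalIntegrable
    rwa [Set.uIcc_of_le hT.le]
  have hIpos : 0 < ∫ s in (0:ℝ)..T, E s :=
    intervalIntegral.intervalIntegral_pos_of_pos_on hEII (fun s _ => hEpos s) hT
  set I : ℝ := ∫ s in (0:ℝ)..T, E s with hI
  -- the value of ∫₀ᵀ K(T,θ)² dθ
  have hTmem : T ∈ Set.Icc (0:ℝ) T := ⟨hT.le, le_refl T⟩
  have hrepT : (∫ θ in (0:ℝ)..T, K T θ * K T θ) = T ^ (2 * H) := by
    have := hrep T hTmem T hTmem
    rw [min_self] at this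
    rw [this, sub_self, abs_zero, Real.zero_rpow (by nlinarith [hH.1] : (2:ℝ) * H ≠ 0)]
    ring
  have hTpow_pos : 0 < T ^ (2 * H) := Real.rpow_pos_of_pos hT _
  have hKTmeas : Measurable (fun θ => K T θ) :=
    hKmeas.comp (measurable_const.prodMk measurable_id)
  -- integrability of θ ↦ K T θ ^ 2 on Ioc 0 T
  have hKT2int : IntegrableOn (fun θ => K T θ ^ 2) (Set.Ioc 0 T) := by
    by_contra hcon
    have h0 : (∫ θ in Set.Ioc (0:ℝ) T, K T θ ^ 2) = 0 := integral_undef hcon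
    have : (∫ θ in (0:ℝ)..T, K T θ * K T θ) = 0 := by
      rw [intervalIntegral.integral_of_le hT.le]
      simpa [pow_two] using h0
    rw [hrepT] at this
    exact absurd this (ne_of_gt hTpow_pos)
  -- pointwise bound: for θ ∈ Ioc 0 T, D θ ^ 2 ≤ σ^2 * K T θ ^ 2
  have key : ∀ θ ∈ Set.Ioc (0:ℝ) T,
      (σ * (∫ s in θ..T, K s θ * E s) / I) ^ 2 ≤ σ ^ 2 * K T θ ^ 2 := by
    intro θ hθ
    set N : ℝ := ∫ s in θ..T, K s θ * E s with hN
    have hNnn : 0 ≤ N := by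
      apply intervalIntegral.integral_nonneg hθ.2
      intro s _
      exact mul_nonneg (hKnn s θ) (hEpos s).le
    have hEintθ : IntegrableOn E (Set.Ioc θ T) :=
      hEint.mono_set ((Set.Ioc_subset_Ioc_left hθ.1.le).trans Set.Ioc_subset_Icc_self)
    have hNle : N ≤ K T θ * I := by
      have h1 : N ≤ K T θ * ∫ s in Set.Ioc θ T, E s := by
        rw [hN, intervalIntegral.integral_of_le hθ.2, ← integral_const_mul]
        apply integral_mono_of_nonneg
        · exact Filter.Eventually.of_forall fun s => mul_nonneg (hKnn s θ) (hEpos s).le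
        · exact hEintθ.const_mul _
        · filter_upwards [ae_restrict_mem measurableSet_Ioc] with s hs
          have hsK : K s θ ≤ K T θ :=
            hKmono θ ⟨hs.1.le, hs.2⟩ ⟨hθ.2, le_refl T⟩ hs.2
          exact mul_le_mul_of_nonneg_right hsK (hEpos s).le
      have h2 : (∫ s in Set.Ioc θ T, E s) ≤ ∫ s in Set.Ioc 0 T, E s := by
        apply setIntegral_mono_set (hEint.mono_set Set.Ioc_subset_Icc_self)
        · exact Filter.Eventually.of_forall fun s => (hEpos s).le
        · exact Filter.Eventually.of_forall (Set.Ioc_subset_Ioc_left hθ.1.le)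
      have hIeq : I = ∫ s in Set.Ioc 0 T, E s := intervalIntegral.integral_of_le hT.le
      calc N ≤ K T θ * ∫ s in Set.Ioc θ T, E s := h1
        _ ≤ K T θ * ∫ s in Set.Ioc 0 T, E s :=
            mul_le_mul_of_nonneg_left h2 (hKnn T θ)
        _ = K T θ * I := by rw [hIeq]
    have hD_nn : 0 ≤ σ * N / I := by positivity
    have hD_le : σ * N / I ≤ σ * K T θ := by
      rw [div_le_iff₀ hIpos]
      calc σ * N ≤ σ * (K T θ * I) := mul_le_mul_of_nonneg_left hNle hσ.le
        _ = σ * K T θ * I := by ring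
    calc (σ * N / I) ^ 2 ≤ (σ * K T θ) ^ 2 := pow_le_pow_left₀ hD_nn hD_le 2
      _ = σ ^ 2 * K T θ ^ 2 := by ring
  -- conclude
  rw [intervalIntegral.integral_of_le hT.le]
  have hmain : (∫ θ in Set.Ioc (0:ℝ) T,
      (σ * (∫ s in θ..T, K s θ * E s) / I) ^ 2) ≤
      ∫ θ in Set.Ioc (0:ℝ) T, σ ^ 2 * K T θ ^ 2 := by
    apply integral_mono_of_nonneg
    · exact Filter.Eventually.of_forall fun θ => sq_nonneg _
    · exact hKT2int.const_mul _
    · filter_upwards [ae_restrict_mem measurableSet_Ioc] with θ hθ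
      exact key θ hθ
  refine hmain.trans ?_
  rw [integral_const_mul]
  have : (∫ θ in Set.Ioc (0:ℝ) T, K T θ ^ 2) = T ^ (2 * H) := by
    rw [← hrepT, intervalIntegral.integral_of_le hT.le]
    congr 1; ext θ; ring
  rw [this]
end
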